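/- The point p_a = (0, 0, −φ₊(0,0)/2) is an equilibrium of Y, i.e. Y(p_a) = 0, and the Jacobian matrix DY(p_a) has characteristic polynomial λ²·(λ + k·φ₊(0,0)). Hence the linearization at p_a has exactly one nonzero eigenvalue, namely −k·φ₊(0,0) < 0, and the eigenvalue 0 with algebraic multiplicity two; in particular p_a is partially hyperbolic but not hyperbolic. -/

import Mathlib

open Polynomial

/-- The blown-up visible-fold vector field in the scaling chart `ε̄ = 1`
of the spherical blowup: `Y(ρ, r, x)`. -/
noncomputable def chartEVF (k : ℕ) (f₂ g₂ : ℝ × ℝ × ℝ → ℝ) (φp : ℝ × ℝ → ℝ)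
    (v : Fin 3 → ℝ) : Fin 3 → ℝ :=
  ![-v 0 *
      ((1 - v 0 ^ k * φp (v 0 ^ (2 * k) * v 1, v 0)) *
          (2 * v 2 + v 0 ^ k * v 1 * g₂ (v 0, v 1, v 2)) +
        φp (v 0 ^ (2 * k) * v 1, v 0)),
    (2 * (k : ℝ) + 1) * v 1 *
      ((1 - v 0 ^ k * φp (v 0 ^ (2 * k) * v 1, v 0)) *
          (2 * v 2 + v 0 ^ k * v 1 * g₂ (v 0, v 1, v 2)) +
        φp (v 0 ^ (2 * k) * v 1, v 0)),
    v 1 * (1 - v 0 ^ k * φp (v 0 ^ (2 * k) * v 1, v 0)) *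
        (1 + v 0 ^ k * f₂ (v 0, v 1, v 2)) +
      (k : ℝ) * v 2 *
        ((1 - v 0 ^ k * φp (v 0 ^ (2 * k) * v 1, v 0)) *
            (2 * v 2 + v 0 ^ k * v 1 * g₂ (v 0, v 1, v 2)) +
          φp (v 0 ^ (2 * k) * v 1, v 0))]

set_option maxHeartbeats 1600000 in
/-- The point `p_a = (0, 0, −φ₊(0,0)/2)` is an equilibrium of `Y`, and
the Jacobian `DY(p_a)` has characteristic polynomial `λ²·(λ + k·φ₊(0,0))`; hence the
linearization has exactly one nonzero eigenvalue `−k·φ₊(0,0) < 0` and the eigenvalue `0`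
with algebraic multiplicity two (partially hyperbolic, not hyperbolic). -/
theorem visible_fold_pa_partially_hyperbolic (k : ℕ) (hk : 1 ≤ k)
    (f₂ g₂ : ℝ × ℝ × ℝ → ℝ) (φp : ℝ × ℝ → ℝ)
    (hf₂ : ContDiff ℝ 1 f₂) (hg₂ : ContDiff ℝ 1 g₂) (hφp : ContDiff ℝ 1 φp)
    (hpos : 0 < φp (0, 0)) :
    chartEVF k f₂ g₂ φp ![0, 0, -φp (0, 0) / 2] = 0 ∧
    (∃ J : Matrix (Fin 3) (Fin 3) ℝ,
      HasFDerivAt (chartEVF k f₂ g₂ φp)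
        (LinearMap.toContinuousLinearMap (Matrix.toLin' J)) ![0, 0, -φp (0, 0) / 2] ∧
      J.charpoly = X ^ 2 * (X + C ((k : ℝ) * φp (0, 0)))) ∧
    -((k : ℝ) * φp (0, 0)) < 0 := by
  have hk0 : k ≠ 0 := by omega
  have h2k0 : 2 * k ≠ 0 := by omega
  set a : ℝ := φp (0, 0) with ha
  set p : Fin 3 → ℝ := ![0, 0, -a / 2] with hpdef
  have hp0 : p 0 = 0 := rfl
  have hp1 : p 1 = 0 := rfl
  have hp2 : p 2 = -a / 2 := rfl
  -- projections
  set P0 : (Fin 3 → ℝ) →L[ℝ] ℝ := ContinuousLinearMap.proj 0 with hP0def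
  set P1 : (Fin 3 → ℝ) →L[ℝ] ℝ := ContinuousLinearMap.proj 1 with hP1def
  set P2 : (Fin 3 → ℝ) →L[ℝ] ℝ := ContinuousLinearMap.proj 2 with hP2def
  have hP0 : HasFDerivAt (fun v : Fin 3 → ℝ => v 0) P0 p := hasFDerivAt_apply 0 p
  have hP1 : HasFDerivAt (fun v : Fin 3 → ℝ => v 1) P1 p := hasFDerivAt_apply 1 p
  have hP2 : HasFDerivAt (fun v : Fin 3 → ℝ => v 2) P2 p := hasFDerivAt_apply 2 p
  -- scalars
  set c : ℝ := fderiv ℝ φp (0, 0) (0, 1) with hc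
  set κ : ℝ := (k : ℝ) * 0 ^ (k - 1) with hκ
  set β : ℝ := a ^ 2 * κ + c with hβ
  -- derivative of v ↦ v 0 ^ k
  have hA : HasFDerivAt (fun v : Fin 3 → ℝ => v 0 ^ k) (κ • P0) p := by
    have h := (hasDerivAt_pow k (p 0)).comp_hasFDerivAt p hP0
    rw [hp0] at h
    exact h
  -- derivative of v ↦ v 0 ^ (2 * k) * v 1 (it is zero)
  have hm : HasFDerivAt (fun v : Fin 3 → ℝ => v 0 ^ (2 * k) * v 1)
      (0 : (Fin 3 → ℝ) →L[ℝ] ℝ) p := by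
    have hA2 := (hasDerivAt_pow (2 * k) (p 0)).comp_hasFDerivAt p hP0
    have h := hA2.mul hP1
    refine h.congr_fderiv ?_
    ext v
    simp [hp0, hp1, zero_pow h2k0]
  -- derivative of Φ
  have hΦ : HasFDerivAt (fun v : Fin 3 → ℝ => φp (v 0 ^ (2 * k) * v 1, v 0)) (c • P0) p := by
    have hu : HasFDerivAt (fun v : Fin 3 → ℝ => (v 0 ^ (2 * k) * v 1, v 0))
        ((0 : (Fin 3 → ℝ) →L[ℝ] ℝ).prod P0) p := hm.prodMk hP0
    have hup : (p 0 ^ (2 * k) * p 1, p 0) = ((0 : ℝ), (0 : ℝ)) := by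
      simp [hp0, hp1]
    have hg : HasFDerivAt φp (fderiv ℝ φp ((0 : ℝ), (0 : ℝ)))
        ((fun v : Fin 3 → ℝ => (v 0 ^ (2 * k) * v 1, v 0)) p) := by
      show HasFDerivAt φp _ (p 0 ^ (2 * k) * p 1, p 0)
      rw [hup]
      exact ((hφp.differentiable one_ne_zero) _).hasFDerivAt
    have h := hg.comp p hu
    refine h.congr_fderiv ?_
    have key : ∀ t : ℝ, fderiv ℝ φp (0, 0) (0, t) = t * c := by
      intro t
      rw [show ((0 : ℝ), t) = t • ((0 : ℝ), (1 : ℝ)) by simp, map_smul]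
      simp [hc]
    ext v
    simp only [ContinuousLinearMap.comp_apply, ContinuousLinearMap.prod_apply,
      ContinuousLinearMap.zero_apply, ContinuousLinearMap.smul_apply, smul_eq_mul]
    rw [key]
    ring
  have hΦp : φp (p 0 ^ (2 * k) * p 1, p 0) = a := by
    rw [hp0, hp1, mul_zero]
  -- derivative of G = g₂ ∘ (v0, v1, v2) and f₂ ∘ (v0, v1, v2)
  have htrip : HasFDerivAt (fun v : Fin 3 → ℝ => ((v 0 : ℝ), (v 1 : ℝ), (v 2 : ℝ)))
      (P0.prod (P1.prod P2)) p := hP0.prodMk (hP1.prodMk hP2)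
  have hG : HasFDerivAt (fun v : Fin 3 → ℝ => g₂ (v 0, v 1, v 2))
      ((fderiv ℝ g₂ (p 0, p 1, p 2)).comp (P0.prod (P1.prod P2))) p :=
    (((hg₂.differentiable one_ne_zero) _).hasFDerivAt).comp p htrip
  have hF2 : HasFDerivAt (fun v : Fin 3 → ℝ => f₂ (v 0, v 1, v 2))
      ((fderiv ℝ f₂ (p 0, p 1, p 2)).comp (P0.prod (P1.prod P2))) p :=
    (((hf₂.differentiable one_ne_zero) _).hasFDerivAt).comp p htrip
  -- derivative of T1 = 1 - v0^k * Φ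
  have hT1 : HasFDerivAt
      (fun v : Fin 3 → ℝ => 1 - v 0 ^ k * φp (v 0 ^ (2 * k) * v 1, v 0))
      ((-(a * κ)) • P0) p := by
    have h := (hA.mul hΦ).const_sub 1
    refine h.congr_fderiv ?_
    ext v
    simp only [ContinuousLinearMap.add_apply, ContinuousLinearMap.smul_apply,
      ContinuousLinearMap.neg_apply, ContinuousLinearMap.comp_apply,
      ContinuousLinearMap.prod_apply, ContinuousLinearMap.zero_apply,
      ContinuousLinearMap.coe_smul', Pi.smul_apply, smul_eq_mul]
    rw [hΦp, hp0, zero_pow hk0]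
    ring
  have hT1p : 1 - p 0 ^ k * φp (p 0 ^ (2 * k) * p 1, p 0) = 1 := by
    rw [hp0, zero_pow hk0]; ring
  -- derivative of T2 = 2*v2 + v0^k * v1 * G
  have hT2 : HasFDerivAt
      (fun v : Fin 3 → ℝ => 2 * v 2 + v 0 ^ k * v 1 * g₂ (v 0, v 1, v 2))
      ((2 : ℝ) • P2) p := by
    have h := (hP2.const_mul (2 : ℝ)).add ((hA.mul hP1).mul hG)
    refine h.congr_fderiv ?_
    ext v
    simp only [ContinuousLinearMap.add_apply, ContinuousLinearMap.smul_apply,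
      ContinuousLinearMap.neg_apply, ContinuousLinearMap.comp_apply,
      ContinuousLinearMap.prod_apply, ContinuousLinearMap.zero_apply,
      ContinuousLinearMap.coe_smul', Pi.smul_apply, smul_eq_mul, Pi.mul_apply]
    rw [hp0, hp1, zero_pow hk0]
    ring
  have hT2p : 2 * p 2 + p 0 ^ k * p 1 * g₂ (p 0, p 1, p 2) = -a := by
    rw [hp0, hp1, hp2, zero_pow hk0]; ring
  -- derivative of F
  have hF : HasFDerivAt
      (fun v : Fin 3 → ℝ =>
        (1 - v 0 ^ k * φp (v 0 ^ (2 * k) * v 1, v 0)) *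
            (2 * v 2 + v 0 ^ k * v 1 * g₂ (v 0, v 1, v 2)) +
          φp (v 0 ^ (2 * k) * v 1, v 0))
      (β • P0 + (2 : ℝ) • P2) p := by
    have h := (hT1.mul hT2).add hΦ
    refine h.congr_fderiv ?_
    ext v
    simp only [ContinuousLinearMap.add_apply, ContinuousLinearMap.smul_apply,
      ContinuousLinearMap.neg_apply, ContinuousLinearMap.comp_apply,
      ContinuousLinearMap.prod_apply, ContinuousLinearMap.zero_apply,
      ContinuousLinearMap.coe_smul', Pi.smul_apply, smul_eq_mul]
    rw [hT1p, hT2p, hβ]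
    ring
  have hFp :
      (1 - p 0 ^ k * φp (p 0 ^ (2 * k) * p 1, p 0)) *
          (2 * p 2 + p 0 ^ k * p 1 * g₂ (p 0, p 1, p 2)) +
        φp (p 0 ^ (2 * k) * p 1, p 0) = 0 := by
    rw [hT1p, hT2p, hΦp]; ring
  -- component 0
  have h0 : HasFDerivAt
      (fun v : Fin 3 → ℝ =>
        -v 0 *
          ((1 - v 0 ^ k * φp (v 0 ^ (2 * k) * v 1, v 0)) *
              (2 * v 2 + v 0 ^ k * v 1 * g₂ (v 0, v 1, v 2)) +
            φp (v 0 ^ (2 * k) * v 1, v 0)))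
      (0 : (Fin 3 → ℝ) →L[ℝ] ℝ) p := by
    have h := (hP0.neg).mul hF
    refine h.congr_fderiv ?_
    ext v
    simp only [ContinuousLinearMap.add_apply, ContinuousLinearMap.smul_apply,
      ContinuousLinearMap.neg_apply, ContinuousLinearMap.comp_apply,
      ContinuousLinearMap.prod_apply, ContinuousLinearMap.zero_apply,
      ContinuousLinearMap.coe_smul', Pi.smul_apply, smul_eq_mul, Pi.mul_apply, Pi.neg_apply]
    rw [hFp, hp0]
    ring
  -- component 1
  have h1 : HasFDerivAt
      (fun v : Fin 3 → ℝ =>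
        (2 * (k : ℝ) + 1) * v 1 *
          ((1 - v 0 ^ k * φp (v 0 ^ (2 * k) * v 1, v 0)) *
              (2 * v 2 + v 0 ^ k * v 1 * g₂ (v 0, v 1, v 2)) +
            φp (v 0 ^ (2 * k) * v 1, v 0)))
      (0 : (Fin 3 → ℝ) →L[ℝ] ℝ) p := by
    have h := (hP1.const_mul (2 * (k : ℝ) + 1)).mul hF
    refine h.congr_fderiv ?_
    ext v
    simp only [ContinuousLinearMap.add_apply, ContinuousLinearMap.smul_apply,
      ContinuousLinearMap.neg_apply, ContinuousLinearMap.comp_apply,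
      ContinuousLinearMap.prod_apply, ContinuousLinearMap.zero_apply,
      ContinuousLinearMap.coe_smul', Pi.smul_apply, smul_eq_mul]
    rw [hFp, hp1]
    ring
  -- component 2
  set D2 : (Fin 3 → ℝ) →L[ℝ] ℝ :=
    (-((k : ℝ) * a * β / 2)) • P0 + P1 + (-((k : ℝ) * a)) • P2 with hD2def
  have h2 : HasFDerivAt
      (fun v : Fin 3 → ℝ =>
        v 1 * (1 - v 0 ^ k * φp (v 0 ^ (2 * k) * v 1, v 0)) *
            (1 + v 0 ^ k * f₂ (v 0, v 1, v 2)) +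
          (k : ℝ) * v 2 *
            ((1 - v 0 ^ k * φp (v 0 ^ (2 * k) * v 1, v 0)) *
                (2 * v 2 + v 0 ^ k * v 1 * g₂ (v 0, v 1, v 2)) +
              φp (v 0 ^ (2 * k) * v 1, v 0)))
      D2 p := by
    have h := ((hP1.mul hT1).mul ((hA.mul hF2).const_add 1)).add
      ((hP2.const_mul (k : ℝ)).mul hF)
    refine h.congr_fderiv ?_
    ext v
    rw [hD2def]
    simp only [ContinuousLinearMap.add_apply, ContinuousLinearMap.smul_apply,
      ContinuousLinearMap.neg_apply, ContinuousLinearMap.comp_apply,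
      ContinuousLinearMap.prod_apply, ContinuousLinearMap.zero_apply,
      ContinuousLinearMap.coe_smul', Pi.smul_apply, smul_eq_mul, Pi.mul_apply]
    rw [hFp, hT1p, hp0, hp1, hp2, zero_pow hk0, hβ]
    ring
  -- assemble the full derivative
  set J : Matrix (Fin 3) (Fin 3) ℝ :=
    !![0, 0, 0; 0, 0, 0; -((k : ℝ) * a * β / 2), 1, -((k : ℝ) * a)] with hJdef
  have hDfull : HasFDerivAt (chartEVF k f₂ g₂ φp)
      (ContinuousLinearMap.pi ![0, 0, D2]) p := by
    have hcomp : ∀ i, HasFDerivAt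
        (![fun v : Fin 3 → ℝ =>
          -v 0 *
            ((1 - v 0 ^ k * φp (v 0 ^ (2 * k) * v 1, v 0)) *
                (2 * v 2 + v 0 ^ k * v 1 * g₂ (v 0, v 1, v 2)) +
              φp (v 0 ^ (2 * k) * v 1, v 0)),
          fun v : Fin 3 → ℝ =>
          (2 * (k : ℝ) + 1) * v 1 *
            ((1 - v 0 ^ k * φp (v 0 ^ (2 * k) * v 1, v 0)) *
                (2 * v 2 + v 0 ^ k * v 1 * g₂ (v 0, v 1, v 2)) +
              φp (v 0 ^ (2 * k) * v 1, v 0)),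
          fun v : Fin 3 → ℝ =>
          v 1 * (1 - v 0 ^ k * φp (v 0 ^ (2 * k) * v 1, v 0)) *
              (1 + v 0 ^ k * f₂ (v 0, v 1, v 2)) +
            (k : ℝ) * v 2 *
              ((1 - v 0 ^ k * φp (v 0 ^ (2 * k) * v 1, v 0)) *
                  (2 * v 2 + v 0 ^ k * v 1 * g₂ (v 0, v 1, v 2)) +
                φp (v 0 ^ (2 * k) * v 1, v 0))] i)
        (![(0 : (Fin 3 → ℝ) →L[ℝ] ℝ), 0, D2] i) p := by
      intro i
      fin_cases i
      · exact h0
      · exact h1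
      · exact h2
    have hfun : chartEVF k f₂ g₂ φp = fun v i =>
        ![fun v : Fin 3 → ℝ =>
          -v 0 *
            ((1 - v 0 ^ k * φp (v 0 ^ (2 * k) * v 1, v 0)) *
                (2 * v 2 + v 0 ^ k * v 1 * g₂ (v 0, v 1, v 2)) +
              φp (v 0 ^ (2 * k) * v 1, v 0)),
          fun v : Fin 3 → ℝ =>
          (2 * (k : ℝ) + 1) * v 1 *
            ((1 - v 0 ^ k * φp (v 0 ^ (2 * k) * v 1, v 0)) *
                (2 * v 2 + v 0 ^ k * v 1 * g₂ (v 0, v 1, v 2)) +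
              φp (v 0 ^ (2 * k) * v 1, v 0)),
          fun v : Fin 3 → ℝ =>
          v 1 * (1 - v 0 ^ k * φp (v 0 ^ (2 * k) * v 1, v 0)) *
              (1 + v 0 ^ k * f₂ (v 0, v 1, v 2)) +
            (k : ℝ) * v 2 *
              ((1 - v 0 ^ k * φp (v 0 ^ (2 * k) * v 1, v 0)) *
                  (2 * v 2 + v 0 ^ k * v 1 * g₂ (v 0, v 1, v 2)) +
                φp (v 0 ^ (2 * k) * v 1, v 0))] i v := by
      funext v i
      fin_cases i <;> rfl
    rw [hfun]
    exact hasFDerivAt_pi.mpr hcomp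
  have hJD : LinearMap.toContinuousLinearMap (Matrix.toLin' J)
      = ContinuousLinearMap.pi ![0, 0, D2] := by
    refine ContinuousLinearMap.ext fun v => funext fun i => ?_
    fin_cases i <;>
      simp [hJdef, hD2def, Matrix.toLin'_apply, Matrix.mulVec, dotProduct,
        Fin.sum_univ_three, ContinuousLinearMap.pi_apply, hP0def, hP1def, hP2def]
  refine ⟨?_, ⟨J, ?_, ?_⟩, ?_⟩
  · funext i
    fin_cases i <;>
    · simp only [chartEVF, Fin.zero_eta, Fin.mk_one, Fin.reduceFinMk, Fin.isValue,
        Matrix.cons_val_zero, Matrix.cons_val_one, Matrix.head_cons,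
        Matrix.cons_val_two, Matrix.tail_cons, Pi.zero_apply]
      rw [hp0, hp1, hp2, zero_pow hk0, zero_pow h2k0]
      first
      | (simp only [zero_mul, mul_zero, neg_zero, sub_zero, add_zero, zero_add, one_mul]
         rw [← ha]; ring)
      | simp only [zero_mul, mul_zero, neg_zero, sub_zero, add_zero, zero_add, one_mul]
  · rw [hJD]; exact hDfull
  · rw [Matrix.charpoly, Matrix.det_fin_three]
    norm_num [Matrix.charmatrix_apply, Matrix.diagonal_apply, Fin.ext_iff, hJdef]
    simp [Matrix.vecHead, Matrix.vecTail]
    exact Or.inl (by ring)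
  · have hkpos : (0 : ℝ) < (k : ℝ) := by exact_mod_cast Nat.pos_of_ne_zero hk0
    nlinarith
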